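/- In the SCP dynamic-programming setting, suppose index j+1 exists and blk(j+1) = blk(j) + 1 (i.e., S_{j+1} is the first set of its block and a previous block exists). Then for every W ⊆ α: OPT(W, j+1, 1) = min( 2 + OPT(W \ S_{j+1}, j, flag(blk(j))), 1 + OPT(W, j, flag(blk(j))) ), where arithmetic is in ℕ ∪ {∞} with c + ∞ = ∞. -/

import Mathlib

/-! Split the index sets admissible for `(W, j', 1)` according to whether they contain `j'`.
Those containing `j'` are exactly the sets `insert j' X` with `X` admissible for
`(W \ S j', j, flag (blk j))`, and they cost `2` more than `X`. Those avoiding `j'` are exactly the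
sets admissible for `(W, j, flag (blk j))`; all their indices are `≤ j`, so by monotonicity they
miss the new block `blk j'`, whose flag `1` adds a penalty of `1`. The infimum over the union is
the minimum of the two shifted infima. -/

/-- `OPT S blk flag W j b` in the SCP dynamic-programming setting: the infimum, over all
index sets `X ⊆ {i : i ≤ j}` covering `W` and meeting every block `β_x` (`x ≤ blk j`)
whose (updated) flag is `2`, of `2|X|` plus the number of blocks `β_x` (`x ≤ blk j`)
with (updated) flag `1` that `X` misses; here the flag of block `blk j` is overridden
to be `b`.  The value is `∞` if no such `X` exists. -/
noncomputable def OPT {α : Type*} [DecidableEq α] {m q : ℕ}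
    (S : Fin m → Finset α) (blk : Fin m → Fin q) (flag : Fin q → ℕ)
    (W : Finset α) (j : Fin m) (b : ℕ) : ℕ∞ :=
  sInf { n : ℕ∞ | ∃ X : Finset (Fin m),
    (∀ i ∈ X, i ≤ j) ∧
    (W ⊆ X.biUnion S) ∧
    (∀ x : Fin q, x ≤ blk j → Function.update flag (blk j) b x = 2 →
      ∃ i ∈ X, blk i = x) ∧
    n = 2 * (X.card : ℕ∞) +
      ((Finset.univ.filter (fun x : Fin q =>
        x ≤ blk j ∧ Function.update flag (blk j) b x = 1 ∧
          ∀ i ∈ X, blk i ≠ x)).card : ℕ∞) }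

namespace SCP

open Finset Function

variable {α : Type*} [DecidableEq α] {m q : ℕ} (S : Fin m → Finset α) (blk : Fin m → Fin q)

def Admissible (f : Fin q → ℕ) (W : Finset α) (j : Fin m) : Set (Finset (Fin m)) :=
  {X | (∀ i ∈ X, i ≤ j) ∧ W ⊆ X.biUnion S ∧ ∀ x ≤ blk j, f x = 2 → ∃ i ∈ X, blk i = x}

def missed (f : Fin q → ℕ) (j : Fin m) (X : Finset (Fin m)) : Finset (Fin q) :=
  univ.filter fun x => x ≤ blk j ∧ f x = 1 ∧ ∀ i ∈ X, blk i ≠ x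

def cost (f : Fin q → ℕ) (j : Fin m) (X : Finset (Fin m)) : ℕ∞ :=
  2 * (X.card : ℕ∞) + ((missed blk f j X).card : ℕ∞)

theorem OPT_eq_iInf (flag : Fin q → ℕ) (W : Finset α) (j : Fin m) (b : ℕ) :
    OPT S blk flag W j b =
      ⨅ X ∈ Admissible S blk (update flag (blk j) b) W j, cost blk (update flag (blk j) b) j X := by
  rw [OPT, ← sInf_image]
  congr 1
  ext n
  simp [Admissible, cost, missed, eq_comm, and_assoc]

variable {S blk} {j j' : Fin m} (flag : Fin q → ℕ)

theorem notMem_of_mem_admissible {f : Fin q → ℕ} {W : Finset α} {X : Finset (Fin m)}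
    (hX : X ∈ Admissible S blk f W j) (hj : j < j') : j' ∉ X :=
  fun h => (hX.1 j' h).not_gt hj

theorem missed_update_insert (hb : blk j ⋖ blk j') (c : ℕ) (X : Finset (Fin m)) :
    missed blk (update flag (blk j') c) j' (insert j' X) = missed blk flag j X := by
  ext x
  simp only [missed, mem_filter, mem_univ, true_and, forall_mem_insert]
  constructor
  · rintro ⟨hx, hfx, hne, hX⟩
    have hlt : x < blk j' := hx.lt_of_ne hne.symm
    exact ⟨hb.le_of_lt hlt, by rwa [update_of_ne hlt.ne] at hfx, hX⟩
  · rintro ⟨hx, hfx, hX⟩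
    have hlt := hx.trans_lt hb.lt
    exact ⟨hlt.le, by rwa [update_of_ne hlt.ne], hlt.ne', hX⟩

theorem missed_update_one (hmono : Monotone blk) (hb : blk j ⋖ blk j') {X : Finset (Fin m)}
    (hX : ∀ i ∈ X, i ≤ j) :
    missed blk (update flag (blk j') 1) j' X = insert (blk j') (missed blk flag j X) := by
  ext x
  simp only [missed, mem_filter, mem_univ, true_and, mem_insert]
  rcases eq_or_ne x (blk j') with rfl | hne
  · simpa using fun i hi => ((hmono (hX i hi)).trans_lt hb.lt).ne
  · have hle : x ≤ blk j' ↔ x ≤ blk j :=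
      ⟨fun hx => hb.le_of_lt (hx.lt_of_ne hne), fun hx => hx.trans hb.lt.le⟩
    simp only [hne, false_or, update_of_ne hne, hle]

theorem admissible_update_insert_iff (hj : j ⋖ j') (hb : blk j ⋖ blk j') (c : ℕ)
    {W : Finset α} {X : Finset (Fin m)} (hX : j' ∉ X) :
    insert j' X ∈ Admissible S blk (update flag (blk j') c) W j' ↔
      X ∈ Admissible S blk flag (W \ S j') j := by
  simp only [Admissible, Set.mem_ofPred_eq, forall_mem_insert, biUnion_insert, exists_mem_insert]
  constructor
  · rintro ⟨⟨-, hle⟩, hcov, h2⟩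
    refine ⟨fun i hi => hj.le_of_lt ((hle i hi).lt_of_ne (ne_of_mem_of_not_mem hi hX)),
      sdiff_le_iff.2 hcov, fun x hx hfx => ?_⟩
    have hlt := hx.trans_lt hb.lt
    exact (h2 x hlt.le (by rwa [update_of_ne hlt.ne])).resolve_left hlt.ne'
  · rintro ⟨hle, hcov, h2⟩
    refine ⟨⟨le_rfl, fun i hi => (hle i hi).trans hj.lt.le⟩, sdiff_le_iff.1 hcov,
      fun x hx hfx => ?_⟩
    rcases eq_or_ne x (blk j') with rfl | hne
    · exact Or.inl rfl
    · exact Or.inr (h2 x (hb.le_of_lt (hx.lt_of_ne hne)) (by rwa [update_of_ne hne] at hfx))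

theorem admissible_update_iff (hj : j ⋖ j') (hb : blk j ⋖ blk j') {c : ℕ} (hc : c ≠ 2)
    {W : Finset α} {X : Finset (Fin m)} (hX : j' ∉ X) :
    X ∈ Admissible S blk (update flag (blk j') c) W j' ↔ X ∈ Admissible S blk flag W j := by
  constructor
  · rintro ⟨hle, hcov, h2⟩
    refine ⟨fun i hi => hj.le_of_lt ((hle i hi).lt_of_ne (ne_of_mem_of_not_mem hi hX)), hcov,
      fun x hx hfx => ?_⟩
    have hlt := hx.trans_lt hb.lt
    exact h2 x hlt.le (by rwa [update_of_ne hlt.ne])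
  · rintro ⟨hle, hcov, h2⟩
    refine ⟨fun i hi => (hle i hi).trans hj.lt.le, hcov, fun x hx hfx => ?_⟩
    have hne : x ≠ blk j' := by
      rintro rfl
      exact hc (by simpa using hfx)
    exact h2 x (hb.le_of_lt (hx.lt_of_ne hne)) (by rwa [update_of_ne hne] at hfx)

theorem admissible_update_eq (hj : j ⋖ j') (hb : blk j ⋖ blk j') {c : ℕ} (hc : c ≠ 2)
    (W : Finset α) :
    Admissible S blk (update flag (blk j') c) W j' =
      insert j' '' Admissible S blk flag (W \ S j') j ∪ Admissible S blk flag W j := by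
  apply Set.Subset.antisymm
  · intro X hX
    by_cases hj'X : j' ∈ X
    · refine Or.inl ⟨X.erase j', ?_, insert_erase hj'X⟩
      rwa [← admissible_update_insert_iff flag hj hb c (notMem_erase j' X), insert_erase hj'X]
    · exact Or.inr ((admissible_update_iff flag hj hb hc hj'X).1 hX)
  · rintro _ (⟨X, hX, rfl⟩ | hX)
    · exact (admissible_update_insert_iff flag hj hb c (notMem_of_mem_admissible hX hj.lt)).2 hX
    · exact (admissible_update_iff flag hj hb hc (notMem_of_mem_admissible hX hj.lt)).2 hX

theorem cost_update_insert (hb : blk j ⋖ blk j') (c : ℕ) {X : Finset (Fin m)} (hX : j' ∉ X) :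
    cost blk (update flag (blk j') c) j' (insert j' X) = 2 + cost blk flag j X := by
  rw [cost, cost, missed_update_insert flag hb, card_insert_of_notMem hX]
  push_cast
  ring

theorem cost_update_one (hmono : Monotone blk) (hb : blk j ⋖ blk j') {X : Finset (Fin m)}
    (hX : ∀ i ∈ X, i ≤ j) :
    cost blk (update flag (blk j') 1) j' X = 1 + cost blk flag j X := by
  have hnot : blk j' ∉ missed blk flag j X := fun h => (mem_filter.1 h).2.1.not_gt hb.lt
  rw [cost, cost, missed_update_one flag hmono hb hX, card_insert_of_notMem hnot]
  push_cast
  ring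

end SCP

theorem scp_recurrence_new_block_flag_one_general
    {α : Type*} [DecidableEq α] {m q : ℕ}
    (S : Fin m → Finset α) (blk : Fin m → Fin q)
    (hmono : Monotone blk)
    (flag : Fin q → ℕ)
    (j j' : Fin m) (hj' : (j' : ℕ) = (j : ℕ) + 1)
    (hblk : (blk j' : ℕ) = (blk j : ℕ) + 1)
    (W : Finset α) :
    OPT S blk flag W j' 1 =
      min (2 + OPT S blk flag (W \ S j') j (flag (blk j)))
        (1 + OPT S blk flag W j (flag (blk j))) := by
  have hj : j ⋖ j' := Fin.covBy_iff.2 (Nat.covBy_iff_add_one_eq.2 hj'.symm)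
  have hb : blk j ⋖ blk j' := Fin.covBy_iff.2 (Nat.covBy_iff_add_one_eq.2 hblk.symm)
  have hOPT (V : Finset α) : OPT S blk flag V j (flag (blk j)) =
      ⨅ X ∈ SCP.Admissible S blk flag V j, SCP.cost blk flag j X := by
    simpa using SCP.OPT_eq_iInf S blk flag V j (flag (blk j))
  rw [SCP.OPT_eq_iInf, SCP.admissible_update_eq flag hj hb (by decide), iInf_union, iInf_image,
    hOPT, hOPT, ENat.add_iInf₂, ENat.add_iInf₂]
  congr 1 <;> refine biInf_congr fun X hX => ?_
  · exact SCP.cost_update_insert flag hb 1 (SCP.notMem_of_mem_admissible hX hj.lt)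
  · exact SCP.cost_update_one flag hmono hb hX.1

/-- SCP recurrence when `S_{j+1}` is the first set of its block and a
previous block exists, for flag `b = 1`:
`OPT(W, j+1, 1) = min(2 + OPT(W \\ S_{j+1}, j, flag(blk j)), 1 + OPT(W, j, flag(blk j)))`. -/
theorem scp_recurrence_new_block_flag_one
    {α : Type*} [DecidableEq α] {m q : ℕ} (hm : 0 < m) (hq : 0 < q)
    (S : Fin m → Finset α) (blk : Fin m → Fin q)
    (hmono : Monotone blk) (hsurj : Function.Surjective blk)
    (flag : Fin q → ℕ) (hflag : ∀ x, flag x ≤ 2)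
    (j j' : Fin m) (hj' : (j' : ℕ) = (j : ℕ) + 1)
    (hblk : (blk j' : ℕ) = (blk j : ℕ) + 1)
    (W : Finset α) :
    OPT S blk flag W j' 1 =
      min (2 + OPT S blk flag (W \ S j') j (flag (blk j)))
        (1 + OPT S blk flag W j (flag (blk j))) :=
  scp_recurrence_new_block_flag_one_general S blk hmono flag j j' hj' hblk W
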